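/- arXiv:1905.03805 — 10 statements merged into one kernel-verified Lean document; each statement's English description precedes it below -/
import Mathlib

section
/- Let γ : U × V → W be a flat bilinear map and let X ∈ U be a regular element such that the form ⟨·,·⟩ restricted to γ^X(V) is nondegenerate, i.e. γ^X(V) ∩ (γ^X(V))^⊥ = {0}. Then the kernel of γ^X equals the right nullity of γ; that is, every Z ∈ V with γ(X,Z) = 0 satisfies γ(Y,Z) = 0 for all Y ∈ U. -/
/-!
For `Z ∈ ker γ^X` and any `Y`, the vector `γ(Y, Z)` lies in `γ^X(V)`: otherwise, for generic `t`,
a lift of a basis of `γ^X(V)` together with `Z` would be mapped by `γ^{X + tY}` to `rank γ^X + 1`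
independent vectors, contradicting the regularity of `X`. Flatness gives
`⟨γ(X, W), γ(Y, Z)⟩ = ⟨γ(Y, W), γ(X, Z)⟩ = 0`, so `γ(Y, Z)` is also orthogonal to `γ^X(V)`,
and nondegeneracy forces it to vanish.
-/

open Module Function

/-- `X` is a (left) regular element of the bilinear map `γ` if the dimension of
`γ^X(V) = range (γ X)` is maximal among all `Y ∈ U`. -/
def IsRegularElement {𝔽 U V W : Type*} [RCLike 𝔽]
    [AddCommGroup U] [Module 𝔽 U] [AddCommGroup V] [Module 𝔽 V]
    [AddCommGroup W] [Module 𝔽 W]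
    (γ : U →ₗ[𝔽] V →ₗ[𝔽] W) (X : U) : Prop :=
  ∀ Y : U, finrank 𝔽 (LinearMap.range (γ Y)) ≤ finrank 𝔽 (LinearMap.range (γ X))

namespace LinearMap

variable {K M N : Type*} [Field K] [Infinite K] [AddCommGroup M] [Module K M]
  [FiniteDimensional K M] [AddCommGroup N] [Module K N]

/-- Applying a left inverse `p` of `f` turns `(f + t • g) x = 0` into `(p ∘ g) x = -t⁻¹ • x`,
so `t` only has to avoid the finitely many `-μ⁻¹` with `μ` an eigenvalue of `p ∘ g`. -/
theorem exists_ne_zero_injective_add_smul {f : M →ₗ[K] N} (hf : Injective f)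
    (g : M →ₗ[K] N) : ∃ t : K, t ≠ 0 ∧ Injective (f + t • g) := by
  obtain ⟨p, hp⟩ := f.exists_leftInverse_of_injective (ker_eq_bot.mpr hf)
  obtain ⟨μ, hμ⟩ :=
    ((Module.End.finite_hasEigenvalue (p ∘ₗ g)).union (Set.finite_singleton 0)).exists_notMem
  simp only [Set.mem_union, Set.mem_ofPred_eq, Set.mem_singleton_iff, not_or] at hμ
  obtain ⟨hμ_eig, hμ0⟩ := hμ
  refine ⟨-μ⁻¹, by simpa using hμ0, (injective_iff_map_eq_zero _).mpr fun x hx => ?_⟩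
  by_contra hx0
  refine hμ_eig (Module.End.hasEigenvalue_of_hasEigenvector
    (Module.End.hasEigenvector_iff.mpr ⟨Module.End.mem_eigenspace_iff.mpr ?_, hx0⟩))
  have hpx : x - μ⁻¹ • p (g x) = 0 := by
    have hpf : p (f x) = x := LinearMap.congr_fun hp x
    simpa [hpf, sub_eq_add_neg] using congrArg p hx
  rw [sub_eq_zero] at hpx
  conv_rhs => rw [hpx, smul_smul, mul_inv_cancel₀ hμ0, one_smul]
  rfl

theorem mem_range_of_forall_finrank_range_add_smul_le {f g : M →ₗ[K] N}
    (hrank : ∀ t : K, finrank K (range (f + t • g)) ≤ finrank K (range f))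
    {z : M} (hz : f z = 0) : g z ∈ range f := by
  by_contra hgz
  obtain ⟨s, hs⟩ := f.rangeRestrict.exists_rightInverse_of_surjective f.range_rangeRestrict
  let L₀ : range f × K →ₗ[K] N := (range f).subtype.coprod (toSpanSingleton K N (g z))
  have hL₀ : Injective L₀ := by
    refine (injective_iff_map_eq_zero _).mpr fun ⟨w, a⟩ h => ?_
    have ha : a = 0 := by
      by_contra ha
      refine hgz ?_
      have : g z = a⁻¹ • -(w : N) := by
        simp only [L₀, coprod_apply, Submodule.subtype_apply, toSpanSingleton_apply,
          add_eq_zero_iff_neg_eq] at h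
        simp [h, smul_smul, ha]
      rw [this]
      exact Submodule.smul_mem _ _ (Submodule.neg_mem _ w.2)
    subst ha
    simpa [L₀] using h
  obtain ⟨t, ht, hinj⟩ := exists_ne_zero_injective_add_smul hL₀ (g ∘ₗ s ∘ₗ fst K _ K)
  -- `(f + t • g) (s w + (a / t) • z) = w + t • g (s w) + a • g z`, as `f z = 0`.
  have hle : range (L₀ + t • g ∘ₗ s ∘ₗ fst K _ K) ≤ range (f + t • g) := by
    rintro _ ⟨⟨w, a⟩, rfl⟩
    refine ⟨s w + (a / t) • z, ?_⟩
    have hw : f (s w) = w := congrArg Subtype.val (LinearMap.congr_fun hs w)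
    simp only [L₀, add_apply, smul_apply, coprod_apply, Submodule.subtype_apply,
      toSpanSingleton_apply, comp_apply, fst_apply, map_add, map_smul, hw, hz, zero_add,
      smul_smul, div_mul_cancel₀ _ ht]
    abel
  have hfinrank := Submodule.finrank_mono hle
  rw [finrank_range_of_inj hinj, finrank_prod, finrank_self] at hfinrank
  linarith [hrank t]

end LinearMap

theorem stmt2_general {𝔽 U V W : Type*} [RCLike 𝔽]
    [AddCommGroup U] [Module 𝔽 U]
    [AddCommGroup V] [Module 𝔽 V] [FiniteDimensional 𝔽 V]
    [AddCommGroup W] [Module 𝔽 W]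
    (B : LinearMap.BilinForm 𝔽 W)
    (γ : U →ₗ[𝔽] V →ₗ[𝔽] W)
    (hflat : ∀ (X Y : U) (Z Wv : V), B (γ X Z) (γ Y Wv) = B (γ Y Z) (γ X Wv))
    (X : U) (hX : IsRegularElement γ X)
    (hnondeg : LinearMap.range (γ X) ⊓ B.orthogonal (LinearMap.range (γ X)) = ⊥) :
    ∀ Z : V, γ X Z = 0 → ∀ Y : U, γ Y Z = 0 := by
  intro Z hZ Y
  have hrange : γ Y Z ∈ LinearMap.range (γ X) :=
    LinearMap.mem_range_of_forall_finrank_range_add_smul_le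
      (fun t => by rw [← map_smul, ← map_add]; exact hX _) hZ
  have horth : γ Y Z ∈ B.orthogonal (LinearMap.range (γ X)) := by
    rintro _ ⟨w, rfl⟩
    exact (hflat X Y w Z).trans (by simp [hZ])
  simpa [hnondeg] using Submodule.mem_inf.mpr ⟨hrange, horth⟩

/-- if `γ` is flat, `X` is regular, and the bilinear form restricted to
`γ^X(V)` is nondegenerate, then the kernel of `γ^X` equals the right nullity of `γ`. -/
theorem stmt2 {𝔽 U V W : Type*} [RCLike 𝔽]
    [AddCommGroup U] [Module 𝔽 U] [FiniteDimensional 𝔽 U]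
    [AddCommGroup V] [Module 𝔽 V] [FiniteDimensional 𝔽 V]
    [AddCommGroup W] [Module 𝔽 W] [FiniteDimensional 𝔽 W]
    (B : LinearMap.BilinForm 𝔽 W) (hBsymm : ∀ v w : W, B v w = B w v)
    (γ : U →ₗ[𝔽] V →ₗ[𝔽] W)
    (hflat : ∀ (X Y : U) (Z Wv : V), B (γ X Z) (γ Y Wv) = B (γ Y Z) (γ X Wv))
    (X : U) (hX : IsRegularElement γ X)
    (hnondeg : LinearMap.range (γ X) ⊓ B.orthogonal (LinearMap.range (γ X)) = ⊥) :
    ∀ Z : V, γ X Z = 0 → ∀ Y : U, γ Y Z = 0 :=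
  stmt2_general B γ hflat X hX hnondeg
end

section
/- Let γ : U × V → W be a bilinear map and let X ∈ U be a regular element. Then γ(Y,Z) ∈ γ^X(V) for every Y ∈ U and every Z ∈ V with γ(X,Z) = 0. -/
open Module

private lemma aux_dual {𝔽 W : Type*} [RCLike 𝔽] [AddCommGroup W] [Module 𝔽 W]
    {n : ℕ} {c : Fin (n+1) → W} (hcind : LinearIndependent 𝔽 c) :
    ∃ φ : W →ₗ[𝔽] (Fin (n+1) → 𝔽), ∀ j, φ (c j) = Pi.single j 1 := by
  let S := Submodule.span 𝔽 (Set.range c)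
  let bS : Basis (Fin (n+1)) 𝔽 S := Basis.span hcind
  let f : S →ₗ[𝔽] (Fin (n+1) → 𝔽) :=
    (Finsupp.linearEquivFunOnFinite 𝔽 𝔽 _).toLinearMap ∘ₗ bS.repr.toLinearMap
  obtain ⟨φ, hφ⟩ := f.exists_extend
  refine ⟨φ, fun j => ?_⟩
  have hmem : c j ∈ S := Submodule.subset_span (Set.mem_range_self j)
  have h1 : (⟨c j, hmem⟩ : S) = bS j := by
    ext; exact congrArg Subtype.val (Basis.span_apply hcind j).symm
  have h2 : φ (c j) = f ⟨c j, hmem⟩ :=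
    congrFun (congrArg (fun g => g.toFun) hφ) ⟨c j, hmem⟩
  rw [h2, h1]
  show (Finsupp.linearEquivFunOnFinite 𝔽 𝔽 _) (bS.repr (bS j)) = _
  rw [Basis.repr_self]
  ext i
  simp [Finsupp.linearEquivFunOnFinite_apply, Finsupp.single_apply, Pi.single_apply, eq_comm]

/-- perturbation lemma: if `c` is linearly independent, then for some `t ≠ 0`,
`c + t • d` is linearly independent. -/
private lemma aux_perturb {𝔽 W : Type*} [RCLike 𝔽] [AddCommGroup W] [Module 𝔽 W]
    {n : ℕ} {c d : Fin (n+1) → W} (hcind : LinearIndependent 𝔽 c) :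
    ∃ t : 𝔽, t ≠ 0 ∧ LinearIndependent 𝔽 (fun j => c j + t • d j) := by
  obtain ⟨φ, hφ⟩ := aux_dual hcind
  set M : Matrix (Fin (n+1)) (Fin (n+1)) (Polynomial 𝔽) :=
    fun i j => Polynomial.C (φ (c j) i) + Polynomial.X * Polynomial.C (φ (d j) i) with hM
  have hev : ∀ t : 𝔽, M.map (Polynomial.eval t) = fun i j => φ (c j + t • d j) i := by
    intro t
    funext i j
    rw [Matrix.map_apply]
    simp only [hM, Matrix.map_apply, map_add, map_smul, Pi.add_apply, Pi.smul_apply,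
      smul_eq_mul, Polynomial.eval_add, Polynomial.eval_mul, Polynomial.eval_C,
      Polynomial.eval_X]
  have hev0 : M.map (Polynomial.eval 0) = 1 := by
    rw [hev 0]
    funext i j
    simp [hφ j, Matrix.one_apply, Pi.single_apply, eq_comm]
  have hdet : ∀ t : 𝔽, M.det.eval t = (M.map (Polynomial.eval t)).det := by
    intro t
    have h := RingHom.map_det (Polynomial.evalRingHom t) M
    rwa [RingHom.mapMatrix_apply, Polynomial.coe_evalRingHom] at h
  set p := M.det with hp
  have hp0 : p.eval 0 = 1 := by rw [hdet 0, hev0, Matrix.det_one]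
  have hpne : p ≠ 0 := fun h => by simp [h] at hp0
  have hq : p * Polynomial.X ≠ 0 := mul_ne_zero hpne Polynomial.X_ne_zero
  obtain ⟨t, ht⟩ : ∃ t : 𝔽, (p * Polynomial.X).eval t ≠ 0 := by
    by_contra h
    push_neg at h
    exact hq (Polynomial.zero_of_eval_zero _ h)
  refine ⟨t, ?_, ?_⟩
  · intro h; apply ht; simp [h]
  · have hdt : (M.map (Polynomial.eval t)).det ≠ 0 := by
      rw [← hdet t]
      intro h
      apply ht
      rw [Polynomial.eval_mul, h, zero_mul]
    have hunit : IsUnit (M.map (Polynomial.eval t)) :=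
      (Matrix.isUnit_iff_isUnit_det _).2 (isUnit_iff_ne_zero.2 hdt)
    have hcols := Matrix.linearIndependent_cols_iff_isUnit.2 hunit
    have hEq : (M.map (Polynomial.eval t)).col =
        fun j => φ (c j + t • d j) := by
      funext j
      funext i
      rw [hev t]
      rfl
    rw [hEq] at hcols
    exact LinearIndependent.of_comp φ hcols

/-- if `X` is a regular element of a bilinear map `γ`, then
`γ(Y,Z) ∈ γ^X(V)` for every `Y ∈ U` and `Z ∈ V` with `γ(X,Z) = 0`. -/
theorem stmt3 {𝔽 U V W : Type*} [RCLike 𝔽]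
    [AddCommGroup U] [Module 𝔽 U] [FiniteDimensional 𝔽 U]
    [AddCommGroup V] [Module 𝔽 V] [FiniteDimensional 𝔽 V]
    [AddCommGroup W] [Module 𝔽 W] [FiniteDimensional 𝔽 W]
    (γ : U →ₗ[𝔽] V →ₗ[𝔽] W)
    (X : U) (hX : IsRegularElement γ X) :
    ∀ (Y : U) (Z : V), γ X Z = 0 → γ Y Z ∈ LinearMap.range (γ X) := by
  intro Y Z hZ
  by_contra hw
  set n := finrank 𝔽 (LinearMap.range (γ X)) with hn
  let b : Basis (Fin n) 𝔽 (LinearMap.range (γ X)) := finBasis 𝔽 _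
  choose v hv using fun i => (b i).2
  set c : Fin (n + 1) → W := Fin.snoc (fun i => ((b i : W))) (γ Y Z) with hc
  set d : Fin (n + 1) → W := Fin.snoc (fun i => γ Y (v i)) 0 with hd
  have hspan : Submodule.span 𝔽 (Set.range fun i => ((b i : W))) = LinearMap.range (γ X) := by
    have : (Set.range fun i => ((b i : W))) =
        (LinearMap.range (γ X)).subtype '' (Set.range b) := by
      rw [← Set.range_comp]; rfl
    rw [this, Submodule.span_image, b.span_eq, Submodule.map_subtype_top]
  have hcind : LinearIndependent 𝔽 c := by
    rw [hc, linearIndependent_fin_snoc]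
    refine ⟨b.linearIndependent.map' (LinearMap.range (γ X)).subtype
      (Submodule.ker_subtype _), ?_⟩
    rw [hspan]; exact hw
  obtain ⟨t, ht0, hind⟩ := aux_perturb (d := d) hcind
  have hmem : ∀ j, c j + t • d j ∈ LinearMap.range (γ (X + t • Y)) := by
    intro j
    refine Fin.lastCases ?_ ?_ j
    · rw [hc, hd]
      simp only [Fin.snoc_last]
      rw [smul_zero, add_zero]
      refine ⟨t⁻¹ • Z, ?_⟩
      have h1 : γ (X + t • Y) Z = t • γ Y Z := by
        simp [map_add, hZ]
      rw [map_smul, h1, smul_smul, inv_mul_cancel₀ ht0, one_smul]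
    · intro i
      rw [hc, hd]
      simp only [Fin.snoc_castSucc]
      refine ⟨v i, ?_⟩
      simp [map_add, hv i]
  have hle : Submodule.span 𝔽 (Set.range fun j => c j + t • d j) ≤
      LinearMap.range (γ (X + t • Y)) :=
    Submodule.span_le.2 (by rintro _ ⟨j, rfl⟩; exact hmem j)
  have h1 : finrank 𝔽 (Submodule.span 𝔽 (Set.range fun j => c j + t • d j)) = n + 1 := by
    rw [finrank_span_eq_card hind, Fintype.card_fin]
  have h2 := Submodule.finrank_mono hle
  rw [h1] at h2
  have h3 := hX (X + t • Y)
  omega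
end

section
/- Let γ : U × V → W be a flat bilinear map such that γ^X(V) is a null subspace of W for every regular element X ∈ U. Then ⟨γ(X,Z), γ(Y,W)⟩ = 0 for all X,Y ∈ U and Z,W ∈ V; in other words, the span of the image of γ is a null subspace of W. -/
open Module

/-- Auxiliary: vectors together with "dual" functionals witnessing the rank of `f`. -/
theorem aux_exists_dual {𝔽 V W : Type*} [RCLike 𝔽]
    [AddCommGroup V] [Module 𝔽 V] [FiniteDimensional 𝔽 V]
    [AddCommGroup W] [Module 𝔽 W] [FiniteDimensional 𝔽 W]
    (f : V →ₗ[𝔽] W) :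
    ∃ (Zv : Fin (finrank 𝔽 (LinearMap.range f)) → V)
      (φ : Fin (finrank 𝔽 (LinearMap.range f)) → (W →ₗ[𝔽] 𝔽)),
      ∀ i j, φ i (f (Zv j)) = if j = i then 1 else 0 := by
  classical
  set r := finrank 𝔽 (LinearMap.range f) with hr
  obtain ⟨b⟩ : Nonempty (Basis (Fin r) 𝔽 (LinearMap.range f)) := ⟨Module.finBasis 𝔽 _⟩
  have hZex : ∀ i : Fin r, ∃ z : V, f z = (b i : W) := fun i => (b i).2
  choose Zv hZv using hZex
  obtain ⟨T, hT⟩ := Submodule.exists_isCompl (LinearMap.range f)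
  refine ⟨Zv, fun i => (b.coord i) ∘ₗ ((LinearMap.range f).projectionOnto T hT), ?_⟩
  intro i j
  simp only [LinearMap.comp_apply, hZv j]
  rw [Submodule.linearProjOfIsCompl_apply_left hT (b j)]
  simp [Module.Basis.coord_apply, Module.Basis.repr_self, Finsupp.single_apply]

/-- Auxiliary: if a square matrix of pairings is invertible, the rank of `f` is at
least the size of the matrix. -/
theorem aux_rank_ge {𝔽 V W : Type*} [RCLike 𝔽]
    [AddCommGroup V] [Module 𝔽 V] [FiniteDimensional 𝔽 V]
    [AddCommGroup W] [Module 𝔽 W] [FiniteDimensional 𝔽 W]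
    (r : ℕ) (f : V →ₗ[𝔽] W) (Zv : Fin r → V) (φ : Fin r → (W →ₗ[𝔽] 𝔽))
    (h : (Matrix.of (fun i j => φ i (f (Zv j)))).det ≠ 0) :
    r ≤ finrank 𝔽 (LinearMap.range f) := by
  classical
  set Mt : Matrix (Fin r) (Fin r) 𝔽 := Matrix.of (fun i j => φ i (f (Zv j))) with hMt
  have hdetU : IsUnit Mt.det := Ne.isUnit h
  have hli : LinearIndependent 𝔽 (fun i => f (Zv i)) := by
    rw [Fintype.linearIndependent_iff]
    intro c hc i
    have hmv : Mt.mulVec c = 0 := by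
      funext k
      have h2 : φ k (∑ j, c j • f (Zv j)) = 0 := by rw [hc]; simp
      simp only [map_sum, map_smul, smul_eq_mul] at h2
      simp only [Matrix.mulVec, dotProduct, hMt, Matrix.of_apply, Pi.zero_apply]
      rw [Finset.sum_congr rfl (fun j _ => mul_comm _ _)]
      exact h2
    have hc0 : c = 0 := by
      have h1 : Mt⁻¹ * Mt = 1 := Matrix.nonsing_inv_mul Mt hdetU
      calc c = (1 : Matrix (Fin r) (Fin r) 𝔽).mulVec c := by simp
        _ = (Mt⁻¹ * Mt).mulVec c := by rw [h1]
        _ = Mt⁻¹.mulVec (Mt.mulVec c) := (Matrix.mulVec_mulVec _ _ _).symm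
        _ = 0 := by rw [hmv]; simp
    exact congrFun hc0 i
  have hmem : ∀ i, f (Zv i) ∈ LinearMap.range f := fun i => ⟨Zv i, rfl⟩
  have hli' : LinearIndependent 𝔽
      (fun i => (⟨f (Zv i), hmem i⟩ : LinearMap.range f)) := by
    apply LinearIndependent.of_comp (LinearMap.range f).subtype
    exact hli
  simpa using hli'.fintype_card_le_finrank

/-- if `γ` is flat and `γ^X(V)` is a null subspace for every regular
element `X`, then the span of the image of `γ` is a null subspace of `W`. -/
theorem stmt6 {𝔽 U V W : Type*} [RCLike 𝔽]
    [AddCommGroup U] [Module 𝔽 U] [FiniteDimensional 𝔽 U]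
    [AddCommGroup V] [Module 𝔽 V] [FiniteDimensional 𝔽 V]
    [AddCommGroup W] [Module 𝔽 W] [FiniteDimensional 𝔽 W]
    (B : LinearMap.BilinForm 𝔽 W) (hBsymm : ∀ v w : W, B v w = B w v)
    (γ : U →ₗ[𝔽] V →ₗ[𝔽] W)
    (hflat : ∀ (X Y : U) (Z Wv : V), B (γ X Z) (γ Y Wv) = B (γ Y Z) (γ X Wv))
    (hnull : ∀ X : U, IsRegularElement γ X → ∀ Z Wv : V, B (γ X Z) (γ X Wv) = 0) :
    ∀ (X Y : U) (Z Wv : V), B (γ X Z) (γ Y Wv) = 0 := by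
  classical
  -- Step 1: a regular element exists
  obtain ⟨X₀, hX₀⟩ : ∃ X₀, IsRegularElement γ X₀ := by
    set s : Set ℕ := Set.range (fun Y : U => finrank 𝔽 (LinearMap.range (γ Y))) with hs
    have hne : s.Nonempty := ⟨_, ⟨(0 : U), rfl⟩⟩
    have hbdd : BddAbove s := by
      refine ⟨finrank 𝔽 W, ?_⟩
      rintro n ⟨Y, rfl⟩
      exact Submodule.finrank_le _
    obtain ⟨X₀, hX₀⟩ := Nat.sSup_mem hne hbdd
    exact ⟨X₀, fun Y => (le_csSup hbdd ⟨Y, rfl⟩).trans hX₀.ge⟩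
  -- Step 2: the diagonal vanishes
  have hdiag : ∀ (Y : U) (Z Wv : V), B (γ Y Z) (γ Y Wv) = 0 := by
    intro Y Z Wv
    set r := finrank 𝔽 (LinearMap.range (γ X₀)) with hr
    obtain ⟨Zv, φ, hφδ⟩ := aux_exists_dual (γ X₀)
    -- scalar data
    set c : Fin r → Fin r → 𝔽 := fun i j => φ i (γ Y (Zv j)) with hc
    -- the determinant polynomial
    set N : Matrix (Fin r) (Fin r) (Polynomial 𝔽) := Matrix.of (fun i j =>
      Polynomial.C (if j = i then (1 : 𝔽) else 0) + Polynomial.X * Polynomial.C (c i j))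
      with hN
    set P : Polynomial 𝔽 := N.det with hP
    have hNeval : ∀ (t : 𝔽) i j,
        Polynomial.eval t (N i j) = (if j = i then 1 else 0) + t * c i j := by
      intro t i j
      rw [hN]
      simp only [Matrix.of_apply, Polynomial.eval_add, Polynomial.eval_mul,
        Polynomial.eval_C, Polynomial.eval_X]
    have hP0 : P.eval 0 = 1 := by
      have h1 : P.eval 0 = ((Polynomial.evalRingHom (0 : 𝔽)).mapMatrix N).det :=
        RingHom.map_det (Polynomial.evalRingHom 0) N
      rw [h1]
      have h2 : (Polynomial.evalRingHom (0 : 𝔽)).mapMatrix N = 1 := by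
        ext i j
        simp only [RingHom.mapMatrix_apply, Matrix.map_apply, Polynomial.coe_evalRingHom]
        rw [hNeval]
        rcases eq_or_ne i j with rfl | h
        · simp
        · simp [h, Ne.symm h]
      rw [h2, Matrix.det_one]
    have hPne : P ≠ 0 := fun h => by simp [h] at hP0
    -- for `t` outside the roots of `P`, `X₀ + t • Y` is regular
    have hreg : ∀ t : 𝔽, P.eval t ≠ 0 → IsRegularElement γ (X₀ + t • Y) := by
      intro t ht
      have hgapp : ∀ z : V, γ (X₀ + t • Y) z = γ X₀ z + t • γ Y z := by
        intro z; simp [map_add, map_smul]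
      have hdet : (Matrix.of (fun i j => φ i (γ (X₀ + t • Y) (Zv j)))).det ≠ 0 := by
        have hEq : Matrix.of (fun i j => φ i (γ (X₀ + t • Y) (Zv j)))
            = (Polynomial.evalRingHom t).mapMatrix N := by
          ext i j
          simp only [RingHom.mapMatrix_apply, Matrix.map_apply, Polynomial.coe_evalRingHom,
            Matrix.of_apply]
          rw [hNeval, hgapp]
          simp [map_add, map_smul, smul_eq_mul, hφδ, hc]
        rw [hEq, ← RingHom.map_det]
        exact ht
      have hrank : r ≤ finrank 𝔽 (LinearMap.range (γ (X₀ + t • Y))) :=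
        aux_rank_ge r (γ (X₀ + t • Y)) Zv φ hdet
      intro Y'
      exact le_trans (hX₀ Y') hrank
    -- the quadratic polynomial in `t`
    set a0 : 𝔽 := B (γ X₀ Z) (γ X₀ Wv) with ha0
    set a1 : 𝔽 := B (γ X₀ Z) (γ Y Wv) + B (γ Y Z) (γ X₀ Wv) with ha1
    set a2 : 𝔽 := B (γ Y Z) (γ Y Wv) with ha2
    set Q : Polynomial 𝔽 := Polynomial.C a0 + Polynomial.C a1 * Polynomial.X +
      Polynomial.C a2 * Polynomial.X ^ 2 with hQ
    have hQeval : ∀ t : 𝔽, P.eval t ≠ 0 → Q.IsRoot t := by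
      intro t ht
      have h0 := hnull _ (hreg t ht) Z Wv
      have hexp : B (γ (X₀ + t • Y) Z) (γ (X₀ + t • Y) Wv)
          = a0 + a1 * t + a2 * t ^ 2 := by
        simp only [map_add, map_smul, LinearMap.add_apply, LinearMap.smul_apply,
          smul_eq_mul, ha0, ha1, ha2]
        ring
      have hz : a0 + a1 * t + a2 * t ^ 2 = 0 := by rw [← hexp]; exact h0
      simp only [Polynomial.IsRoot, hQ, Polynomial.eval_add, Polynomial.eval_mul,
        Polynomial.eval_C, Polynomial.eval_X, Polynomial.eval_pow]
      linear_combination hz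
    have hQ0 : Q = 0 := by
      apply Polynomial.eq_zero_of_infinite_isRoot
      have hfin : Set.Finite {t : 𝔽 | P.IsRoot t} := Polynomial.finite_setOf_isRoot hPne
      have hinf : Set.Infinite {t : 𝔽 | P.IsRoot t}ᶜ := Set.Finite.infinite_compl hfin
      refine hinf.mono ?_
      intro t ht
      exact hQeval t ht
    have hc2 : Q.coeff 2 = a2 := by
      simp [hQ, Polynomial.coeff_add, Polynomial.coeff_C, Polynomial.coeff_C_mul,
        Polynomial.coeff_X, Polynomial.coeff_X_pow]
    rw [hQ0] at hc2
    simpa using hc2.symm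
  -- Step 3: polarize
  intro X Y Z Wv
  have h1 : B (γ (X + Y) Z) (γ (X + Y) Wv) = 0 := hdiag (X + Y) Z Wv
  simp only [map_add, LinearMap.add_apply] at h1
  have h3 := hflat X Y Z Wv
  have h2 : (2 : 𝔽) * B (γ X Z) (γ Y Wv) = 0 := by
    linear_combination h1 + h3 - hdiag X Z Wv - hdiag Y Z Wv
  exact (mul_eq_zero.mp h2).resolve_left two_ne_zero
end

section
/- The subspace Ω = S(β) ∩ S(β)^⊥ has even dimension. -/
open Module

/-- The neutral symmetric bilinear form `⟨⟨(a,b),(c,d)⟩⟩ = ⟨a,c⟩ - ⟨b,d⟩` on `W × W`. -/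
noncomputable def neutralForm (W : Type*) [NormedAddCommGroup W] [InnerProductSpace ℝ W] :
    LinearMap.BilinForm ℝ (W × W) :=
  LinearMap.BilinForm.comp (innerₗ W) (LinearMap.fst ℝ W W) (LinearMap.fst ℝ W W) -
    LinearMap.BilinForm.comp (innerₗ W) (LinearMap.snd ℝ W W) (LinearMap.snd ℝ W W)

/-- A finite-dimensional real vector space with a complex structure has even dimension. -/
lemma even_finrank_of_complexStructure {M : Type*} [AddCommGroup M] [Module ℝ M]
    [FiniteDimensional ℝ M] (f : M →ₗ[ℝ] M) (hf : ∀ x, f (f x) = -x) :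
    Even (finrank ℝ M) := by
  have hcomp : f ∘ₗ f = (-1 : ℝ) • LinearMap.id := by
    ext x; simp [hf x]
  have hdet : LinearMap.det f * LinearMap.det f = (-1 : ℝ) ^ finrank ℝ M := by
    rw [← LinearMap.det_comp, hcomp, LinearMap.det_smul, LinearMap.det_id, mul_one]
  rcases Nat.even_or_odd (finrank ℝ M) with h | h
  · exact h
  · exfalso
    rw [h.neg_one_pow] at hdet
    nlinarith [sq_nonneg (LinearMap.det f)]

/-- for `β(X,Y) = (α(X,Y), α(JX,Y))`, the subspace
`Ω = S(β) ∩ S(β)ᗮ` has even dimension. -/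
theorem stmt10 {V W : Type*} [AddCommGroup V] [Module ℝ V] [FiniteDimensional ℝ V]
    [NormedAddCommGroup W] [InnerProductSpace ℝ W] [FiniteDimensional ℝ W]
    (J : V →ₗ[ℝ] V) (hJ : ∀ v : V, J (J v) = -v)
    (α : V →ₗ[ℝ] V →ₗ[ℝ] W) :
    Even (finrank ℝ
      ↥(Submodule.span ℝ {w : W × W | ∃ X Y : V, (α X Y, α (J X) Y) = w} ⊓
        (neutralForm W).orthogonal
          (Submodule.span ℝ {w : W × W | ∃ X Y : V, (α X Y, α (J X) Y) = w}))) := by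
  set s : Set (W × W) := {w : W × W | ∃ X Y : V, (α X Y, α (J X) Y) = w} with hs
  set S := Submodule.span ℝ s with hS
  set B := neutralForm W with hB
  -- the complex structure σ (a,b) = (b, -a)
  set σ : W × W →ₗ[ℝ] W × W :=
    { toFun := fun p => (p.2, -p.1)
      map_add' := by intro p q; simp [Prod.ext_iff]; abel
      map_smul' := by intro c p; simp [Prod.ext_iff] } with hσ
  have hσσ : ∀ p : W × W, σ (σ p) = -p := by intro p; simp [hσ, Prod.ext_iff]
  have hBσ : ∀ u v : W × W, B (σ u) (σ v) = -(B u v) := by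
    intro u v
    simp [hB, neutralForm, hσ, real_inner_comm]
  -- σ maps S into S
  have hσS : ∀ x ∈ S, σ x ∈ S := by
    intro x hx
    induction hx using Submodule.span_induction with
    | mem x hx =>
      obtain ⟨X, Y, rfl⟩ := hx
      apply Submodule.subset_span
      exact ⟨J X, Y, by simp [hσ, hJ X]⟩
    | zero => simp
    | add x y _ _ hx hy => rw [map_add]; exact Submodule.add_mem _ hx hy
    | smul c x _ hx => rw [map_smul]; exact Submodule.smul_mem _ _ hx
  -- σ maps S^⊥ into S^⊥
  have hσO : ∀ x ∈ B.orthogonal S, σ x ∈ B.orthogonal S := by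
    intro x hx n hn
    have h1 : -(σ n) ∈ S := Submodule.neg_mem _ (hσS n hn)
    have h2 : B (σ (-(σ n))) (σ x) = -(B (-(σ n)) x) := hBσ _ _
    have h3 : σ (-(σ n)) = n := by rw [map_neg, hσσ, neg_neg]
    rw [h3] at h2
    have h4 : B (-(σ n)) x = 0 := hx _ h1
    rw [h4, neg_zero] at h2
    exact h2
  -- restrict σ to Ω
  have hσΩ : ∀ x ∈ S ⊓ B.orthogonal S, σ x ∈ S ⊓ B.orthogonal S := by
    intro x hx
    exact ⟨hσS x hx.1, hσO x hx.2⟩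
  exact even_finrank_of_complexStructure (σ.restrict hσΩ)
    (fun x => Subtype.ext (by simpa [LinearMap.restrict_apply] using hσσ (x : W × W)))
end

section
/- Let α : V × V → W be a bilinear map whose image spans W, and let T : W → W be a linear map such that α(X,Y) = T(α(JX,Y)) for all X,Y ∈ V. Then T² = −I. -/
open Module

section

variable {R V W : Type*} [CommRing R] [AddCommGroup V] [Module R V] [AddCommGroup W] [Module R W]
  {J : V →ₗ[R] V} {α : V →ₗ[R] V →ₗ[R] W} {T : W →ₗ[R] W}

theorem apply_apply_bilin_eq_neg (hJ : ∀ v, J (J v) = -v)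
    (hT : ∀ X Y, α X Y = T (α (J X) Y)) (X Y : V) :
    T (T (α X Y)) = -α X Y := by
  have hJX : α (J X) Y = -T (α X Y) := by
    rw [hT (J X) Y, hJ, map_neg, LinearMap.neg_apply, map_neg]
  have hXY := hT X Y
  rw [hJX, map_neg] at hXY
  exact neg_eq_iff_eq_neg.mp hXY.symm

theorem comp_self_eq_neg_id_of_span_bilin_image (hJ : ∀ v, J (J v) = -v)
    (hspan : Submodule.span R {w : W | ∃ X Y : V, α X Y = w} = ⊤)
    (hT : ∀ X Y, α X Y = T (α (J X) Y)) :
    T ∘ₗ T = -LinearMap.id :=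
  LinearMap.ext_on hspan fun _ ⟨X, Y, hw⟩ => hw ▸ apply_apply_bilin_eq_neg hJ hT X Y

end

theorem stmt11_general {V W : Type*} [AddCommGroup V] [Module ℝ V]
    [AddCommGroup W] [Module ℝ W]
    (J : V →ₗ[ℝ] V) (hJ : ∀ v : V, J (J v) = -v)
    (α : V →ₗ[ℝ] V →ₗ[ℝ] W)
    (hspan : Submodule.span ℝ {w : W | ∃ X Y : V, α X Y = w} = ⊤)
    (T : W →ₗ[ℝ] W)
    (hT : ∀ X Y : V, α X Y = T (α (J X) Y)) :
    ∀ w : W, T (T w) = -w :=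
  LinearMap.congr_fun (comp_self_eq_neg_id_of_span_bilin_image hJ hspan hT)

/-- if the image of `α` spans `W` and `α(X,Y) = T(α(JX,Y))` for all
`X, Y`, then `T² = -I`. -/
theorem stmt11 {V W : Type*} [AddCommGroup V] [Module ℝ V] [FiniteDimensional ℝ V]
    [AddCommGroup W] [Module ℝ W] [FiniteDimensional ℝ W]
    (J : V →ₗ[ℝ] V) (hJ : ∀ v : V, J (J v) = -v)
    (α : V →ₗ[ℝ] V →ₗ[ℝ] W)
    (hspan : Submodule.span ℝ {w : W | ∃ X Y : V, α X Y = w} = ⊤)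
    (T : W →ₗ[ℝ] W)
    (hT : ∀ X Y : V, α X Y = T (α (J X) Y)) :
    ∀ w : W, T (T w) = -w :=
  stmt11_general J hJ α hspan T hT
end

section
/- Assume in addition that the image of α spans W. Then there exist a subspace Γ' ⊆ W and a linear isometry T : Γ' → Γ' (with respect to the inner product of W) with T² = −I, such that Ω = {(η, Tη) : η ∈ Γ'} and, denoting by P the orthogonal projection of W onto Γ', P(α(JX,Y)) = T(P(α(X,Y))) for all X,Y ∈ V. -/
open Module

open RealInnerProductSpace in
private lemma neutralForm_apply {W : Type*} [NormedAddCommGroup W] [InnerProductSpace ℝ W]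
    (x y : W × W) : neutralForm W x y = ⟪x.1, y.1⟫ - ⟪x.2, y.2⟫ := by
  simp [neutralForm]

open RealInnerProductSpace in
/-- if the image of `α` spans `W`, then `Ω = S(β) ∩ S(β)ᗮ` is the graph
of a linear isometry `T : Γ' → Γ'` with `T² = -I`, and the `Γ'`-component of
`α(J·,·)` is `T` applied to that of `α`. -/
theorem stmt12 {V W : Type*} [AddCommGroup V] [Module ℝ V] [FiniteDimensional ℝ V]
    [NormedAddCommGroup W] [InnerProductSpace ℝ W] [FiniteDimensional ℝ W]
    (J : V →ₗ[ℝ] V) (hJ : ∀ v : V, J (J v) = -v)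
    (α : V →ₗ[ℝ] V →ₗ[ℝ] W)
    (hspan : Submodule.span ℝ {w : W | ∃ X Y : V, α X Y = w} = ⊤) :
    ∃ (Γ' : Submodule ℝ W) (T : Γ' →ₗᵢ[ℝ] Γ'),
      (∀ η : Γ', T (T η) = -η) ∧
      (∀ x : W × W,
        x ∈ Submodule.span ℝ {w : W × W | ∃ X Y : V, (α X Y, α (J X) Y) = w} ⊓
            (neutralForm W).orthogonal
              (Submodule.span ℝ {w : W × W | ∃ X Y : V, (α X Y, α (J X) Y) = w}) ↔
          ∃ η : Γ', x = (↑η, ↑(T η))) ∧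
      (∀ X Y : V,
        Γ'.orthogonalProjectionOnto (α (J X) Y) = T (Γ'.orthogonalProjectionOnto (α X Y))) := by
  classical
  set S : Submodule ℝ (W × W) :=
    Submodule.span ℝ {w : W × W | ∃ X Y : V, (α X Y, α (J X) Y) = w} with hS
  have hgen : ∀ X Y : V, (α X Y, α (J X) Y) ∈ S := fun X Y =>
    Submodule.subset_span ⟨X, Y, rfl⟩
  have hJneg : ∀ X Y : V, α (J (J X)) Y = -(α X Y) := by
    intro X Y; rw [hJ, map_neg, LinearMap.neg_apply]
  set σ : W × W →ₗ[ℝ] W × W :=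
    LinearMap.prod (LinearMap.snd ℝ W W) (-(LinearMap.fst ℝ W W)) with hσdef
  have hσ_apply : ∀ x : W × W, σ x = (x.2, -x.1) := fun x => rfl
  have hσS : ∀ x ∈ S, σ x ∈ S := by
    intro x hx
    have hle : S.map σ ≤ S := by
      rw [hS, Submodule.map_span, Submodule.span_le]
      rintro _ ⟨_, ⟨X, Y, rfl⟩, rfl⟩
      have : σ (α X Y, α (J X) Y) = (α (J X) Y, α (J (J X)) Y) := by
        rw [hσ_apply, hJneg]
      rw [this]; exact hgen (J X) Y
    exact hle ⟨x, hx, rfl⟩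
  set Sp : Submodule ℝ (W × W) := (neutralForm W).orthogonal S with hSp
  have hperp : ∀ x ∈ Sp, ∀ s ∈ S, neutralForm W s x = 0 := fun x hx => hx
  have hσform : ∀ s x : W × W, neutralForm W s (σ x) = neutralForm W (σ s) x := by
    intro s x
    simp only [neutralForm_apply, hσ_apply, inner_neg_right, inner_neg_left]
    ring
  have hσSp : ∀ x ∈ Sp, σ x ∈ Sp := by
    intro x hx s hs
    show neutralForm W s (σ x) = 0
    rw [hσform]
    exact hperp x hx (σ s) (hσS s hs)
  -- vanishing of first component forces vanishing of second
  have hker : ∀ x : W × W, x ∈ Sp → x.1 = 0 → x.2 = 0 := by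
    intro x hx h1
    have key : ∀ X Y : V, ⟪α X Y, x.2⟫ = 0 := by
      intro X Y
      have h := hperp x hx _ (hgen (J X) Y)
      rw [neutralForm_apply] at h
      simp only [hJneg, h1, inner_zero_right, inner_neg_left, zero_sub, neg_neg] at h
      linarith [h]
    have hall : ∀ w ∈ Submodule.span ℝ {w : W | ∃ X Y : V, α X Y = w},
        ⟪w, x.2⟫ = 0 := by
      intro w hw
      induction hw using Submodule.span_induction with
      | mem w hw => obtain ⟨X, Y, rfl⟩ := hw; exact key X Y
      | zero => simp
      | add a b _ _ iha ihb => rw [inner_add_left, iha, ihb, add_zero]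
      | smul c a _ ih => rw [real_inner_smul_left, ih, mul_zero]
    have := hall x.2 (by rw [hspan]; trivial)
    exact inner_self_eq_zero.mp this
  have hΩinj : ∀ x ∈ S ⊓ Sp, ∀ y ∈ S ⊓ Sp, x.1 = y.1 → x = y := by
    intro x hx y hy h1
    have hsub : x - y ∈ Sp := Sp.sub_mem hx.2 hy.2
    have h2 : (x - y).2 = 0 := hker _ hsub (by simp [h1])
    have : x.2 = y.2 := by
      have := sub_eq_zero.mp h2; exact this
    exact Prod.ext h1 this
  have hσΩ : ∀ x ∈ S ⊓ Sp, σ x ∈ S ⊓ Sp := fun x hx => ⟨hσS x hx.1, hσSp x hx.2⟩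
  -- the map and its graph
  set f : ↥(S ⊓ Sp) →ₗ[ℝ] W := (LinearMap.fst ℝ W W) ∘ₗ (S ⊓ Sp).subtype with hfdef
  have hfinj : Function.Injective f := by
    intro a b hab
    exact Subtype.ext (hΩinj _ a.2 _ b.2 hab)
  set Γ' : Submodule ℝ W := LinearMap.range f with hΓdef
  set e : ↥(S ⊓ Sp) ≃ₗ[ℝ] ↥Γ' := LinearEquiv.ofInjective f hfinj with hedef
  have hsnd : ∀ x : ↥(S ⊓ Sp), ((x : W × W)).2 ∈ Γ' := by
    intro x
    exact ⟨⟨σ ↑x, hσΩ _ x.2⟩, rfl⟩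
  set g : ↥(S ⊓ Sp) →ₗ[ℝ] ↥Γ' :=
    LinearMap.codRestrict Γ' ((LinearMap.snd ℝ W W) ∘ₗ (S ⊓ Sp).subtype) hsnd with hgdef
  set T₀ : ↥Γ' →ₗ[ℝ] ↥Γ' := g ∘ₗ (e.symm : ↥Γ' →ₗ[ℝ] ↥(S ⊓ Sp)) with hTdef
  have hT₀ : ∀ (x : ↥(S ⊓ Sp)) (h : ((x : W × W)).1 ∈ Γ'),
      (T₀ ⟨((x : W × W)).1, h⟩ : W) = ((x : W × W)).2 := by
    intro x h
    have he : e.symm ⟨((x : W × W)).1, h⟩ = x := by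
      rw [LinearEquiv.symm_apply_eq]
      apply Subtype.ext
      rfl
    show (g (e.symm ⟨((x : W × W)).1, h⟩) : W) = _
    rw [he]
    rfl
  have hmemT : ∀ η : ↥Γ', (((η : W), ((T₀ η : ↥Γ') : W)) : W × W) ∈ S ⊓ Sp := by
    intro η
    obtain ⟨x, hx⟩ := η.2
    have hη : η = ⟨((x : W × W)).1, ⟨x, rfl⟩⟩ := Subtype.ext hx.symm
    rw [hη]
    convert x.2 using 1
    exact Prod.ext rfl (hT₀ x _)
  -- scalar identities
  have hform0 : ∀ x ∈ S ⊓ Sp, ∀ y ∈ S ⊓ Sp, ⟪x.1, y.1⟫ = ⟪x.2, y.2⟫ := by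
    intro x hx y hy
    have := hperp y hy.2 x hx.1
    rw [neutralForm_apply] at this
    linarith
  have hinner : ∀ η μ : ↥Γ', ⟪((T₀ η : ↥Γ') : W), ((T₀ μ : ↥Γ') : W)⟫
      = ⟪(η : W), (μ : W)⟫ :=
    fun η μ => (hform0 _ (hmemT η) _ (hmemT μ)).symm
  have hskew : ∀ η μ : ↥Γ', ⟪((T₀ η : ↥Γ') : W), (μ : W)⟫
      = -⟪(η : W), ((T₀ μ : ↥Γ') : W)⟫ := by
    intro η μ
    have h1 := hσΩ _ (hmemT η)
    have := hform0 _ h1 _ (hmemT μ)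
    rw [hσ_apply] at this
    simpa [inner_neg_left] using this
  have hTT : ∀ η : ↥Γ', T₀ (T₀ η) = -η := by
    intro η
    have h1 := hmemT (T₀ η)
    have h2 := hσΩ _ (hmemT η)
    rw [hσ_apply] at h2
    have := hΩinj _ h1 _ h2 rfl
    have h3 : ((T₀ (T₀ η) : ↥Γ') : W) = -(η : W) := congrArg Prod.snd this
    exact Subtype.ext (by simpa using h3)
  -- the isometry
  have hnorm : ∀ η : ↥Γ', ‖T₀ η‖ = ‖η‖ := by
    intro η
    have h := hinner η η
    rw [real_inner_self_eq_norm_mul_norm, real_inner_self_eq_norm_mul_norm] at h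
    have := (mul_self_inj_of_nonneg (norm_nonneg _) (norm_nonneg _)).mp h
    exact this
  refine ⟨Γ', ⟨T₀, hnorm⟩, hTT, ?_, ?_⟩
  · intro x
    constructor
    · intro hx
      refine ⟨⟨x.1, ⟨⟨x, hx⟩, rfl⟩⟩, ?_⟩
      have := hT₀ ⟨x, hx⟩ ⟨⟨x, hx⟩, rfl⟩
      exact Prod.ext rfl this.symm
    · rintro ⟨η, rfl⟩
      exact hmemT η
  · intro X Y
    set u := Γ'.orthogonalProjectionOnto (α X Y) with hu
    set L := Γ'.orthogonalProjectionOnto (α (J X) Y) with hL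
    have key : ∀ η : ↥Γ', ⟪((L : ↥Γ') : W), (η : W)⟫ = ⟪((T₀ u : ↥Γ') : W), (η : W)⟫ := by
      intro η
      have hp1 : ⟪((L : ↥Γ') : W), (η : W)⟫ = ⟪α (J X) Y, (η : W)⟫ := by
        have h : ⟪α (J X) Y - ((L : ↥Γ') : W), (η : W)⟫ = 0 :=
            Submodule.starProjection_inner_eq_zero (K := Γ') (α (J X) Y) η η.2
        rw [inner_sub_left] at h
        linarith
      have hp2 : ⟪α X Y, ((T₀ η : ↥Γ') : W)⟫ = ⟪((u : ↥Γ') : W), ((T₀ η : ↥Γ') : W)⟫ := by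
        have h : ⟪α X Y - ((u : ↥Γ') : W), ((T₀ η : ↥Γ') : W)⟫ = 0 :=
            Submodule.starProjection_inner_eq_zero (K := Γ') (α X Y) _ (T₀ η).2
        rw [inner_sub_left] at h
        linarith
      have hgp := hperp _ (hmemT η).2 _ (hgen (J X) Y)
      rw [neutralForm_apply] at hgp
      simp only [hJneg, inner_neg_left] at hgp
      have hs := hskew u η
      rw [hp1, hs]
      have : ⟪α (J X) Y, (η : W)⟫ = -⟪α X Y, ((T₀ η : ↥Γ') : W)⟫ := by linarith
      rw [this, hp2]
    have hd : L - T₀ u = 0 := by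
      have h0 := key (L - T₀ u)
      have h1 : ⟪((L - T₀ u : ↥Γ') : W), ((L - T₀ u : ↥Γ') : W)⟫ = 0 := by
        rw [Submodule.coe_sub, inner_sub_left]
        rw [Submodule.coe_sub] at h0
        linarith
      have h2 := inner_self_eq_zero.mp h1
      exact Subtype.ext (by simpa using h2)
    have := sub_eq_zero.mp hd
    exact this
end

section
/- Let E be a finite-dimensional real inner product space, A : E → E a symmetric linear operator, and D ⊆ E a subspace such that ⟨A x, y⟩ = 0 for all x, y ∈ D. Then dim (ker A ∩ D) ≥ 2 dim D − dim E. -/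
/-! The hypothesis says `A` maps `D` into `Dᗮ`, so rank–nullity for `A` restricted to `D` gives
`dim D ≤ dim (ker A ∩ D) + dim Dᗮ = dim (ker A ∩ D) + dim E - dim D`. -/

open Module
open scoped InnerProductSpace

theorem LinearMap.finrank_map_add_finrank_ker_inf {K V W : Type*} [DivisionRing K]
    [AddCommGroup V] [Module K V] [AddCommGroup W] [Module K W] [FiniteDimensional K V]
    (f : V →ₗ[K] W) (D : Submodule K V) :
    finrank K (D.map f) + finrank K ↥(ker f ⊓ D) = finrank K D := by
  rw [← range_domRestrict, ← (f.domRestrict D).finrank_range_add_finrank_ker, ker_domRestrict,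
    inf_comm, ← Submodule.map_comap_subtype]
  exact congrArg _ (Submodule.equivMapOfInjective _ D.injective_subtype _).finrank_eq.symm

theorem Submodule.map_le_orthogonal_of_inner_eq_zero {𝕜 E : Type*} [RCLike 𝕜]
    [NormedAddCommGroup E] [InnerProductSpace 𝕜 E] {A : E →ₗ[𝕜] E} {D : Submodule 𝕜 E}
    (hD : ∀ x ∈ D, ∀ y ∈ D, ⟪A x, y⟫_𝕜 = 0) :
    D.map A ≤ Dᗮ := by
  rintro _ ⟨x, hx, rfl⟩
  exact (mem_orthogonal' D _).2 fun y hy ↦ hD x hx y hy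

theorem stmt13_general {E : Type*} [NormedAddCommGroup E] [InnerProductSpace ℝ E]
    [FiniteDimensional ℝ E]
    (A : E →ₗ[ℝ] E)
    (D : Submodule ℝ E) (hD : ∀ x ∈ D, ∀ y ∈ D, ⟪A x, y⟫_ℝ = 0) :
    (finrank ℝ ↥(LinearMap.ker A ⊓ D) : ℤ) ≥
      2 * (finrank ℝ ↥D : ℤ) - (finrank ℝ E : ℤ) := by
  have hrange := Submodule.finrank_mono (Submodule.map_le_orthogonal_of_inner_eq_zero hD)
  have hrankNullity := A.finrank_map_add_finrank_ker_inf D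
  have hcompl := D.finrank_add_finrank_orthogonal
  omega

/-- if `A` is a symmetric operator on `E` and `⟨Ax,y⟩ = 0` for all
`x, y ∈ D`, then `dim (ker A ∩ D) ≥ 2 dim D - dim E`. -/
theorem stmt13 {E : Type*} [NormedAddCommGroup E] [InnerProductSpace ℝ E]
    [FiniteDimensional ℝ E]
    (A : E →ₗ[ℝ] E) (hAsymm : ∀ x y : E, ⟪A x, y⟫_ℝ = ⟪x, A y⟫_ℝ)
    (D : Submodule ℝ E) (hD : ∀ x ∈ D, ∀ y ∈ D, ⟪A x, y⟫_ℝ = 0) :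
    (finrank ℝ ↥(LinearMap.ker A ⊓ D) : ℤ) ≥
      2 * (finrank ℝ ↥D : ℤ) - (finrank ℝ E : ℤ) :=
  stmt13_general A D hD
end

section
/- Let E be a finite-dimensional real inner product space, D ⊆ E a subspace, and A₁, …, A_k : E → E symmetric linear operators such that ⟨A_i x, y⟩ = 0 for all x, y ∈ D and all i = 1, …, k. Then dim (D ∩ ⋂_{i=1}^{k} ker A_i) ≥ dim D − k (dim E − dim D). -/
/-! Each `A i` maps `D` into `Dᗮ`, so `x ↦ (A i x)ᵢ` maps `D` into `(Dᗮ)ᵏ` with kernel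
`D ⊓ ⨅ i, ker (A i)`; rank–nullity and `dim Dᗮ = dim E - dim D` give the bound. -/

open Module
open scoped InnerProductSpace

namespace Submodule

section

variable {K V M ι : Type*} [DivisionRing K] [AddCommGroup V] [Module K V]
  [AddCommGroup M] [Module K M]

theorem finrank_map_add_finrank_inf_ker (D : Submodule K V) [FiniteDimensional K D]
    (f : V →ₗ[K] M) :
    finrank K (D.map f) + finrank K ↥(D ⊓ LinearMap.ker f) = finrank K D := by
  have hker : LinearMap.ker (f.domRestrict D) ≃ₗ[K] ↥(D ⊓ LinearMap.ker f) := by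
    rw [LinearMap.ker_domRestrict, ← top_inf_eq (comap _ _), ← comap_subtype_self D,
      ← comap_inf]
    exact comapSubtypeEquivOfLe inf_le_left
  rw [← hker.finrank_eq, ← LinearMap.range_domRestrict]
  exact (f.domRestrict D).finrank_range_add_finrank_ker

theorem finrank_le_finrank_inf_iInf_ker_add [Fintype ι] (D : Submodule K V)
    [FiniteDimensional K D] (A : ι → V →ₗ[K] M) {W : Submodule K M} [FiniteDimensional K W]
    (hW : ∀ i, D.map (A i) ≤ W) :
    finrank K D ≤ finrank K ↥(D ⊓ ⨅ i, LinearMap.ker (A i)) + Fintype.card ι * finrank K W := by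
  have hrange : D.map (LinearMap.pi A) ≤ LinearMap.range (W.subtype.compLeft ι) := by
    rintro _ ⟨x, hx, rfl⟩
    exact ⟨fun i => ⟨A i x, hW i ⟨x, hx, rfl⟩⟩, rfl⟩
  have hmap : finrank K (D.map (LinearMap.pi A)) ≤ Fintype.card ι * finrank K W := calc
    _ ≤ finrank K (LinearMap.range (W.subtype.compLeft ι)) := finrank_mono hrange
    _ ≤ finrank K (ι → W) := LinearMap.finrank_range_le _
    _ = Fintype.card ι * finrank K W := by simp [finrank_pi_fintype]
  rw [← D.finrank_map_add_finrank_inf_ker (LinearMap.pi A), LinearMap.ker_pi]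
  omega

end

theorem map_le_orthogonal_of_inner_eq_zero_s14 {𝕜 E : Type*} [RCLike 𝕜] [NormedAddCommGroup E]
    [InnerProductSpace 𝕜 E] {D : Submodule 𝕜 E} {f : E →ₗ[𝕜] E}
    (hf : ∀ x ∈ D, ∀ y ∈ D, ⟪f x, y⟫_𝕜 = 0) : D.map f ≤ Dᗮ := by
  rintro _ ⟨x, hx, rfl⟩
  exact (mem_orthogonal D _).2 fun y hy => inner_eq_zero_symm.1 (hf x hx y hy)

end Submodule

theorem stmt14_general {E : Type*} [NormedAddCommGroup E] [InnerProductSpace ℝ E]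
    [FiniteDimensional ℝ E] (k : ℕ)
    (A : Fin k → E →ₗ[ℝ] E)
    (D : Submodule ℝ E) (hD : ∀ i : Fin k, ∀ x ∈ D, ∀ y ∈ D, ⟪A i x, y⟫_ℝ = 0) :
    (finrank ℝ ↥(D ⊓ ⨅ i : Fin k, LinearMap.ker (A i)) : ℤ) ≥
      (finrank ℝ ↥D : ℤ) - k * ((finrank ℝ E : ℤ) - (finrank ℝ ↥D : ℤ)) := by
  have hbound := D.finrank_le_finrank_inf_iInf_ker_add A
    fun i => Submodule.map_le_orthogonal_of_inner_eq_zero_s14 (hD i)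
  have hcodim := D.finrank_add_finrank_orthogonal
  rw [Fintype.card_fin] at hbound
  rw [← hcodim]
  push_cast
  linarith

/-- if `A₁, …, A_k` are symmetric operators on `E` with `⟨A_i x, y⟩ = 0`
for all `x, y ∈ D`, then `dim (D ∩ ⋂ᵢ ker Aᵢ) ≥ dim D - k (dim E - dim D)`. -/
theorem stmt14 {E : Type*} [NormedAddCommGroup E] [InnerProductSpace ℝ E]
    [FiniteDimensional ℝ E] (k : ℕ)
    (A : Fin k → E →ₗ[ℝ] E)
    (hAsymm : ∀ i : Fin k, ∀ x y : E, ⟪A i x, y⟫_ℝ = ⟪x, A i y⟫_ℝ)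
    (D : Submodule ℝ E) (hD : ∀ i : Fin k, ∀ x ∈ D, ∀ y ∈ D, ⟪A i x, y⟫_ℝ = 0) :
    (finrank ℝ ↥(D ⊓ ⨅ i : Fin k, LinearMap.ker (A i)) : ℤ) ≥
      (finrank ℝ ↥D : ℤ) - k * ((finrank ℝ E : ℤ) - (finrank ℝ ↥D : ℤ)) :=
  stmt14_general k A D hD
end

section
/- Let W be a finite-dimensional real inner product space, L and L̂ subspaces of W, and τ : L → L̂ a surjective linear isometry. Let E be the maximal subspace of L with τ(E) = E (it exists since the sum of two such subspaces is again one), and let V be the orthogonal complement of E in L. Then τ(V) is orthogonal to E, and, denoting by P_V the orthogonal projection of W onto V and by B = P_V ∘ τ|_V : V → V, for every v ∈ V the iterates Bⁱ v converge to 0 as i → ∞. -/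
open Module
open scoped InnerProductSpace

/-- A subspace `E ⊆ L` is `τ`-invariant if `τ(E) = E`. -/
def TauInvariant {W : Type*} [NormedAddCommGroup W] [InnerProductSpace ℝ W]
    {L Lhat : Submodule ℝ W} (τ : L ≃ₗᵢ[ℝ] Lhat) (E : Submodule ℝ W) : Prop :=
  E ≤ L ∧ (fun x : L => (τ x : W)) '' {x : L | (x : W) ∈ E} = (E : Set W)

/-- `B = P_V ∘ τ|_V : V → V`, where `V = L ⊓ Eᗮ` is the orthogonal complement of `E`
in `L` and `P_V` is the orthogonal projection of `W` onto `V`. -/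
noncomputable def Bop {W : Type*} [NormedAddCommGroup W] [InnerProductSpace ℝ W]
    [FiniteDimensional ℝ W] {L Lhat : Submodule ℝ W} (τ : L ≃ₗᵢ[ℝ] Lhat)
    (E : Submodule ℝ W) : ↥(L ⊓ Eᗮ) →ₗ[ℝ] ↥(L ⊓ Eᗮ) :=
  (Submodule.orthogonalProjectionOnto (L ⊓ Eᗮ)).toLinearMap ∘ₗ Lhat.subtype ∘ₗ
    τ.toLinearEquiv.toLinearMap ∘ₗ Submodule.inclusion inf_le_left

open Filter in
set_option maxHeartbeats 1000000 in
lemma aux_tendsto_iterate_zero {X : Type*} [NormedAddCommGroup X]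
    [NormedSpace ℝ X] [FiniteDimensional ℝ X] (B : X →ₗ[ℝ] X)
    (hB : ∀ x, ‖B x‖ ≤ ‖x‖)
    (h0 : ∀ x : X, (∀ n : ℕ, ‖(⇑B)^[n] x‖ = ‖x‖) → x = 0) (v : X) :
    Tendsto (fun i : ℕ => (⇑B)^[i] v) atTop (nhds 0) := by
  have hmono : Antitone fun n : ℕ => ‖(⇑B)^[n] v‖ := by
    apply antitone_nat_of_succ_le
    intro n
    rw [Function.iterate_succ_apply']
    exact hB _
  have hbdd : BddBelow (Set.range fun n : ℕ => ‖(⇑B)^[n] v‖) :=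
    ⟨0, by rintro x ⟨n, rfl⟩; positivity⟩
  set c : ℝ := ⨅ n : ℕ, ‖(⇑B)^[n] v‖ with hc
  have hlim : Tendsto (fun n : ℕ => ‖(⇑B)^[n] v‖) atTop (nhds c) :=
    tendsto_atTop_ciInf hmono hbdd
  have hc0 : c = 0 := by
    by_contra hne
    -- compactness: extract convergent subsequence
    have hball : ∀ n : ℕ, (⇑B)^[n] v ∈ Metric.closedBall (0 : X) ‖v‖ := by
      intro n
      simpa [Metric.mem_closedBall, dist_eq_norm] using hmono (Nat.zero_le n)
    obtain ⟨w, -, φ, hφ, hwlim⟩ :=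
      (isCompact_closedBall (0 : X) ‖v‖).tendsto_subseq hball
    have hBm : ∀ m : ℕ, ‖(⇑B)^[m] w‖ = c := by
      intro m
      have hcont : Continuous fun x : X => (⇑B)^[m] x := by
        exact (B.continuous_of_finiteDimensional).iterate m
      have h1 : Tendsto (fun k : ℕ => (⇑B)^[m] ((⇑B)^[φ k] v)) atTop
          (nhds ((⇑B)^[m] w)) := (hcont.tendsto w).comp hwlim
      have h2 : Tendsto (fun k : ℕ => ‖(⇑B)^[m + φ k] v‖) atTop (nhds c) :=
        hlim.comp (by
          exact tendsto_atTop_mono (fun k => Nat.le_add_left (φ k) m) hφ.tendsto_atTop)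
      have h3 : Tendsto (fun k : ℕ => ‖(⇑B)^[m] ((⇑B)^[φ k] v)‖) atTop (nhds c) := by
        have he : (fun k : ℕ => ‖(⇑B)^[m] ((⇑B)^[φ k] v)‖)
            = fun k : ℕ => ‖(⇑B)^[m + φ k] v‖ := by
          funext k; rw [Function.iterate_add_apply]
        rw [he]; exact h2
      exact tendsto_nhds_unique ((continuous_norm.tendsto _).comp h1) h3
    have hw0 : w = 0 := by
      apply h0
      intro n
      rw [hBm n, ← hBm 0]
      simp
    rw [hw0] at hBm
    have h00 := hBm 0
    simp at h00
    exact hne h00.symm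
  rw [tendsto_zero_iff_norm_tendsto_zero]
  rw [hc0] at hlim
  exact hlim

set_option maxHeartbeats 1000000 in
/-- for the maximal `τ`-invariant subspace `E` of `L`, the image `τ(V)`
of the orthogonal complement `V` of `E` in `L` is orthogonal to `E`, and the iterates
of `B = P_V ∘ τ|_V` tend to `0`. -/
theorem stmt15 {W : Type*} [NormedAddCommGroup W] [InnerProductSpace ℝ W]
    [FiniteDimensional ℝ W]
    (L Lhat : Submodule ℝ W) (τ : L ≃ₗᵢ[ℝ] Lhat)
    (E : Submodule ℝ W) (hE : TauInvariant τ E)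
    (hEmax : ∀ F : Submodule ℝ W, TauInvariant τ F → F ≤ E) :
    (∀ x : L, (x : W) ∈ L ⊓ Eᗮ → ∀ e ∈ E, ⟪(τ x : W), e⟫_ℝ = 0) ∧
    (∀ v : ↥(L ⊓ Eᗮ),
      Filter.Tendsto (fun i : ℕ => (⇑(Bop τ E))^[i] v) Filter.atTop (nhds 0)) := by
  have hortho : ∀ x : L, (x : W) ∈ L ⊓ Eᗮ → ∀ e ∈ E, ⟪(τ x : W), e⟫_ℝ = 0 := by
    intro x hx e he
    have he' : e ∈ (fun x : L => (τ x : W)) '' {x : L | (x : W) ∈ E} := by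
      rw [hE.2]; exact he
    obtain ⟨y, hyE, hye⟩ := he'
    rw [← hye]
    have h1 : ⟪(τ x : W), (τ y : W)⟫_ℝ = ⟪(x : W), (y : W)⟫_ℝ := τ.inner_map_map x y
    rw [h1, real_inner_comm]
    exact hx.2 (y : W) hyE
  refine ⟨hortho, ?_⟩
  -- notation
  set V : Submodule ℝ W := L ⊓ Eᗮ with hVdef
  set B : ↥V →ₗ[ℝ] ↥V := Bop τ E with hBdef
  set Tlin : ↥V →ₗ[ℝ] W :=
    Lhat.subtype ∘ₗ τ.toLinearEquiv.toLinearMap ∘ₗ Submodule.inclusion inf_le_left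
    with hTdef
  have hBapply : ∀ v : ↥V, B v = Submodule.orthogonalProjectionOnto V (Tlin v) := fun v => rfl
  have hTnorm : ∀ v : ↥V, ‖Tlin v‖ = ‖v‖ := by
    intro v
    have : Tlin v = (τ (Submodule.inclusion inf_le_left v) : W) := rfl
    rw [this]
    have h2 : ‖τ (Submodule.inclusion inf_le_left v)‖
        = ‖Submodule.inclusion (inf_le_left : V ≤ L) v‖ := τ.norm_map _
    exact h2
  have hBle : ∀ v : ↥V, ‖B v‖ ≤ ‖v‖ := by
    intro v
    rw [hBapply v, ← hTnorm v]
    calc ‖Submodule.orthogonalProjectionOnto V (Tlin v)‖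
          ≤ ‖Submodule.orthogonalProjectionOnto V‖ * ‖Tlin v‖ := (Submodule.orthogonalProjectionOnto V).le_opNorm _
        _ ≤ 1 * ‖Tlin v‖ := by
            have h := Submodule.orthogonalProjectionOnto_norm_le V
            nlinarith [norm_nonneg (Tlin v)]
        _ = ‖Tlin v‖ := one_mul _
  have hBeq : ∀ v : ↥V, ‖B v‖ = ‖v‖ → ((B v : W) = Tlin v) := by
    intro v hv
    have hpyth := Submodule.norm_sq_eq_add_norm_sq_projection (Tlin v) V
    have hnorm : ‖Submodule.orthogonalProjectionOnto V (Tlin v)‖ = ‖Tlin v‖ := by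
      rw [← hBapply v, hv, hTnorm v]
    have hzero : ‖Submodule.orthogonalProjectionOnto Vᗮ (Tlin v)‖ = 0 := by
      have hq := hpyth
      rw [hnorm] at hq
      nlinarith [norm_nonneg (Submodule.orthogonalProjectionOnto Vᗮ (Tlin v))]
    have h0 : Submodule.orthogonalProjectionOnto Vᗮ (Tlin v) = 0 := by
      rwa [norm_eq_zero] at hzero
    have hsum := Submodule.starProjection_add_starProjection_orthogonal (K := V) (Tlin v)
    rw [Submodule.starProjection_apply, Submodule.starProjection_apply] at hsum
    rw [h0] at hsum
    rw [hBapply v]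
    simpa using hsum
  -- the subspace of vectors on which iterates of B preserve the norm
  set F : Submodule ℝ ↥V :=
    ⨅ n : ℕ, LinearMap.ker ((V.subtype ∘ₗ B - Tlin) ∘ₗ (B ^ n)) with hFdef
  have hmemF : ∀ v : ↥V, v ∈ F ↔
      ∀ n : ℕ, ((B ((⇑B)^[n] v) : W)) = Tlin ((⇑B)^[n] v) := by
    intro v
    rw [hFdef]
    simp only [Submodule.mem_iInf, LinearMap.mem_ker, LinearMap.comp_apply,
      LinearMap.sub_apply, Module.End.pow_apply, Submodule.coe_subtype, sub_eq_zero]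
  have hFnorm : ∀ v ∈ F, ∀ n : ℕ, ‖(⇑B)^[n] v‖ = ‖v‖ := by
    intro v hv n
    induction n with
    | zero => simp
    | succ n ih =>
      rw [Function.iterate_succ_apply']
      have h1 := (hmemF v).mp hv n
      have : ‖B ((⇑B)^[n] v)‖ = ‖(B ((⇑B)^[n] v) : W)‖ := rfl
      rw [this, h1, hTnorm, ← ih]
  have hFconv : ∀ v : ↥V, (∀ n : ℕ, ‖(⇑B)^[n] v‖ = ‖v‖) → v ∈ F := by
    intro v hv
    rw [hmemF]
    intro n
    apply hBeq
    have h1 : ‖B ((⇑B)^[n] v)‖ = ‖(⇑B)^[n+1] v‖ := by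
      rw [Function.iterate_succ_apply']
    rw [h1, hv (n+1), hv n]
  have hBF : ∀ v ∈ F, B v ∈ F := by
    intro v hv
    rw [hmemF] at hv ⊢
    intro n
    have : (⇑B)^[n] (B v) = (⇑B)^[n+1] v := by
      rw [Function.iterate_succ_apply]
    rw [this]
    exact hv (n+1)
  -- F as a submodule of W, and its τ-invariance
  set F' : Submodule ℝ W := F.map V.subtype with hF'def
  have hF'V : F' ≤ V := by
    rw [hF'def]
    rintro w ⟨u, -, rfl⟩
    exact u.2
  have hFinj : Function.Injective (B.restrict hBF) := by
    rw [← LinearMap.ker_eq_bot]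
    rw [LinearMap.ker_eq_bot']
    intro z hz
    have h1 : B (z : ↥V) = 0 := by
      have := congrArg (Subtype.val) hz
      simpa [LinearMap.restrict_apply] using this
    have h2 : ‖B (z : ↥V)‖ = ‖(z : ↥V)‖ := by
      have := hFnorm (z : ↥V) z.2 1
      simpa using this
    rw [h1] at h2
    have : (z : ↥V) = 0 := by
      rw [← norm_eq_zero, ← h2]; simp
    exact Subtype.ext this
  have hFsurj : Function.Surjective (B.restrict hBF) :=
    LinearMap.injective_iff_surjective.mp hFinj
  have hF'inv : TauInvariant τ F' := by
    constructor
    · exact hF'V.trans inf_le_left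
    · apply Set.Subset.antisymm
      · rintro w ⟨x, hx, rfl⟩
        obtain ⟨u, hu, hux⟩ := hx
        have hxeq : Submodule.inclusion (inf_le_left : V ≤ L) u = x :=
          Subtype.ext (by simpa using hux)
        have h1 : (τ x : W) = Tlin u := by rw [← hxeq]; rfl
        have h2 : Tlin u = (B u : W) := ((hmemF u).mp hu 0).symm
        exact ⟨B u, hBF u hu, ((h1.trans h2).symm : (B u : W) = (τ x : W))⟩
      · rintro w ⟨u, hu, rfl⟩
        obtain ⟨z, hz⟩ := hFsurj ⟨u, hu⟩
        refine ⟨Submodule.inclusion (inf_le_left : V ≤ L) (z : ↥V), ?_, ?_⟩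
        · exact ⟨(z : ↥V), z.2, rfl⟩
        · have h1 : (τ (Submodule.inclusion (inf_le_left : V ≤ L) (z : ↥V)) : W)
              = Tlin (z : ↥V) := rfl
          have h2 : Tlin (z : ↥V) = (B (z : ↥V) : W) := ((hmemF _).mp z.2 0).symm
          have h3 : B (z : ↥V) = u := by
            have := congrArg Subtype.val hz
            simpa [LinearMap.restrict_apply] using this
          exact h1.trans (h2.trans (congrArg Subtype.val h3))
  have hF'E : F' ≤ E := hEmax F' hF'inv
  have hFbot : ∀ v : ↥V, v ∈ F → v = 0 := by
    intro v hv
    have h1 : (v : W) ∈ E := hF'E ⟨v, hv, rfl⟩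
    have h2 : (v : W) ∈ Eᗮ := v.2.2
    have h3 : ⟪(v : W), (v : W)⟫_ℝ = 0 := h2 (v : W) h1
    have h4 : (v : W) = 0 := by
      rwa [inner_self_eq_zero] at h3
    exact Subtype.ext h4
  -- conclude
  intro v
  apply aux_tendsto_iterate_zero B hBle
  intro x hx
  exact hFbot x (hFconv x hx)
end

section
/- Let W and H be finite-dimensional real inner product spaces, L and L̂ subspaces of W, τ : L → L̂ a surjective linear isometry, and E the maximal subspace of L with τ(E) = E. Let A : W → H be a linear map such that A(ξ) = 0 for all ξ ∈ L^⊥, and suppose there is a linear isometry T : H → H with A(τξ) = T(A(ξ)) for all ξ ∈ L. Then A(ξ) = 0 for all ξ ∈ E^⊥ (the orthogonal complement of E in W). -/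
open Module
open scoped InnerProductSpace
open scoped RealInnerProductSpace

private lemma frob {W H : Type*} [NormedAddCommGroup W] [InnerProductSpace ℝ W]
    [FiniteDimensional ℝ W] [NormedAddCommGroup H] [InnerProductSpace ℝ H]
    [FiniteDimensional ℝ H] (A : W →ₗ[ℝ] H)
    {ι κ : Type*} [Fintype ι] [Fintype κ]
    (b : OrthonormalBasis ι ℝ H) (f : OrthonormalBasis κ ℝ W) :
    ∑ i, ⟪LinearMap.adjoint A (b i), LinearMap.adjoint A (b i)⟫_ℝ
      = ∑ j, ⟪A (f j), A (f j)⟫_ℝ := by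
  have h1 : ∀ i, ⟪LinearMap.adjoint A (b i), LinearMap.adjoint A (b i)⟫_ℝ
      = ∑ j, ⟪b i, A (f j)⟫_ℝ * ⟪A (f j), b i⟫_ℝ := by
    intro i
    rw [← f.sum_inner_mul_inner]
    congr 1; ext j
    rw [LinearMap.adjoint_inner_left, LinearMap.adjoint_inner_right]
  have h2 : ∀ j, ⟪A (f j), A (f j)⟫_ℝ
      = ∑ i, ⟪A (f j), b i⟫_ℝ * ⟪b i, A (f j)⟫_ℝ := by
    intro j; rw [b.sum_inner_mul_inner]
  simp_rw [h1, h2]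
  rw [Finset.sum_comm]
  congr 1; ext j; congr 1; ext i; ring

/-- if `A : W → H` vanishes on `Lᗮ` and intertwines `τ` with a linear
isometry `T` of `H`, then `A` vanishes on `Eᗮ`, where `E` is the maximal
`τ`-invariant subspace of `L`. -/
theorem stmt16 {W H : Type*} [NormedAddCommGroup W] [InnerProductSpace ℝ W]
    [FiniteDimensional ℝ W] [NormedAddCommGroup H] [InnerProductSpace ℝ H]
    [FiniteDimensional ℝ H]
    (L Lhat : Submodule ℝ W) (τ : L ≃ₗᵢ[ℝ] Lhat)
    (E : Submodule ℝ W) (hE : TauInvariant τ E)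
    (hEmax : ∀ F : Submodule ℝ W, TauInvariant τ F → F ≤ E)
    (A : W →ₗ[ℝ] H) (hA0 : ∀ ξ ∈ Lᗮ, A ξ = 0)
    (T : H →ₗᵢ[ℝ] H) (hT : ∀ ξ : L, A ↑(τ ξ) = T (A ↑ξ)) :
    ∀ ξ ∈ Eᗮ, A ξ = 0 := by
  classical
  set B := LinearMap.adjoint A with hB
  have hTsurj : Function.Surjective T := by
    have := LinearMap.injective_iff_surjective (f := T.toLinearMap)
    exact this.mp T.injective
  let T' : H ≃ₗᵢ[ℝ] H := LinearIsometryEquiv.ofSurjective T hTsurj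
  have hT'app : ∀ h, T' h = T h := fun h => by
    rw [LinearIsometryEquiv.coe_ofSurjective]
  -- Step 1: range of adjoint lands in L
  have hBL : ∀ h, B h ∈ L := by
    intro h
    have : B h ∈ Lᗮᗮ := by
      rw [Submodule.mem_orthogonal]
      intro u hu
      rw [real_inner_comm, hB, LinearMap.adjoint_inner_left, hA0 u hu,
        inner_zero_right]
    rwa [Submodule.orthogonal_orthogonal] at this
  -- Step 3: key identity
  have hkey : ∀ h : H, (B (T'.symm h) : W)
      = ((τ.symm (Submodule.orthogonalProjection Lhat (B h))) : W) := by
    intro h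
    set pv := Submodule.orthogonalProjection Lhat (B h) with hpv
    set y : L := τ.symm pv with hy
    set z : L := ⟨B (T'.symm h), hBL _⟩ with hz
    have hinner : ∀ x : L, ⟪(y : W), (x : W)⟫_ℝ = ⟪(z : W), (x : W)⟫_ℝ := by
      intro x
      have e1 : ⟪(y : W), (x : W)⟫_ℝ = ⟪((pv : W)), ((τ x : Lhat) : W)⟫_ℝ := by
        have := τ.inner_map_map y x
        rw [hy, LinearIsometryEquiv.apply_symm_apply] at this
        calc ⟪(y : W), (x : W)⟫_ℝ = ⟪y, x⟫_ℝ := rfl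
          _ = ⟪pv, τ x⟫_ℝ := this.symm
          _ = ⟪((pv : W)), ((τ x : Lhat) : W)⟫_ℝ := rfl
      have e2 : ⟪((B h - (pv : W))), ((τ x : Lhat) : W)⟫_ℝ = 0 := by
        have hmem : B h - (pv : W) ∈ Lhatᗮ :=
          Submodule.sub_starProjection_mem_orthogonal (B h)
        exact (Submodule.mem_orthogonal' _ _).mp hmem _ (τ x).2
      have e3 : ⟪(B h), ((τ x : Lhat) : W)⟫_ℝ = ⟪(z : W), (x : W)⟫_ℝ := by
        have t2 : ⟪h, T (A (x : W))⟫_ℝ = ⟪T'.symm h, A (x : W)⟫_ℝ := by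
          rw [← T'.inner_map_map (T'.symm h) (A (x : W)),
            T'.apply_symm_apply, hT'app]
        rw [hB, LinearMap.adjoint_inner_left, hT x, t2,
          ← LinearMap.adjoint_inner_left A]
      have : ⟪(B h), ((τ x : Lhat) : W)⟫_ℝ
          = ⟪((pv : W)), ((τ x : Lhat) : W)⟫_ℝ := by
        have expand := inner_sub_left (𝕜 := ℝ) (B h) ((pv : W)) ((τ x : Lhat) : W)
        rw [e2] at expand
        linarith [expand]
      rw [e1, this.symm, e3]
    have hd : ((y - z : L) : W) = 0 := by
      have h0 : ⟪(y - z : L), (y - z : L)⟫_ℝ = 0 := by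
        have := hinner (y - z)
        have coes : ((y - z : L) : W) = (y : W) - (z : W) := rfl
        calc ⟪(y - z : L), (y - z : L)⟫_ℝ
            = ⟪((y - z : L) : W), ((y - z : L) : W)⟫_ℝ := rfl
          _ = ⟪(y : W), ((y - z : L) : W)⟫_ℝ - ⟪(z : W), ((y - z : L) : W)⟫_ℝ := by
              rw [coes, inner_sub_left]
          _ = 0 := by rw [this]; ring
      have := inner_self_eq_zero (𝕜 := ℝ) (x := (y - z : L)) |>.mp h0
      rw [this]; rfl
    have hsub : (y : W) - (z : W) = 0 := hd
    exact (sub_eq_zero.mp hsub).symm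

  -- norm identity
  have hnorm : ∀ h : H,
      ‖B (T'.symm h)‖ = ‖((Submodule.orthogonalProjection Lhat (B h)) : W)‖ := by
    intro h
    rw [hkey h]
    calc ‖((τ.symm (Submodule.orthogonalProjection Lhat (B h))) : W)‖
        = ‖τ.symm (Submodule.orthogonalProjection Lhat (B h))‖ := rfl
      _ = ‖Submodule.orthogonalProjection Lhat (B h)‖ := τ.symm.norm_map _
      _ = ‖((Submodule.orthogonalProjection Lhat (B h)) : W)‖ := rfl
  -- Pythagoras
  have pyth : ∀ v : W, ‖v‖ ^ 2
      = ‖((Submodule.orthogonalProjection Lhat v) : W)‖ ^ 2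
        + ‖v - Submodule.orthogonalProjection Lhat v‖ ^ 2 := by
    intro v
    have hz : ⟪((Submodule.orthogonalProjection Lhat v) : W),
        v - Submodule.orthogonalProjection Lhat v⟫_ℝ = 0 := by
      have hmem := Submodule.sub_starProjection_mem_orthogonal (K := Lhat) v
      exact (Submodule.mem_orthogonal _ _).mp hmem _ (Submodule.orthogonalProjection Lhat v).2
    have hxy : ((Submodule.orthogonalProjection Lhat v) : W)
        + (v - Submodule.orthogonalProjection Lhat v) = v := by abel
    have := norm_add_sq_real ((Submodule.orthogonalProjection Lhat v : W))
      (v - Submodule.orthogonalProjection Lhat v)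
    rw [hz, hxy] at this
    linarith
  -- every B h lies in Lhat
  have hBLhat : ∀ h : H, B h ∈ Lhat := by
    have b := stdOrthonormalBasis ℝ H
    have f := stdOrthonormalBasis ℝ W
    set c := b.map T'.symm with hc
    have hsum : ∑ i, ⟪B (c i), B (c i)⟫_ℝ = ∑ i, ⟪B (b i), B (b i)⟫_ℝ := by
      rw [frob A c f, frob A b f]
    have hterm : ∀ i, ⟪B (c i), B (c i)⟫_ℝ
        = ‖((Submodule.orthogonalProjection Lhat (B (b i))) : W)‖ ^ 2 := by
      intro i
      have : c i = T'.symm (b i) := rfl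
      rw [this, real_inner_self_eq_norm_sq, hnorm (b i)]
    have hterm2 : ∀ i, ⟪B (b i), B (b i)⟫_ℝ
        = ‖((Submodule.orthogonalProjection Lhat (B (b i))) : W)‖ ^ 2
          + ‖B (b i) - Submodule.orthogonalProjection Lhat (B (b i))‖ ^ 2 := by
      intro i
      rw [real_inner_self_eq_norm_sq, pyth (B (b i))]
    have hzero : ∑ i, ‖B (b i) - Submodule.orthogonalProjection Lhat (B (b i))‖ ^ 2 = 0 := by
      have := hsum
      simp_rw [hterm, hterm2, Finset.sum_add_distrib] at this
      linarith
    have hbase : ∀ i, B (b i) ∈ Lhat := by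
      intro i
      have hnn : ∀ j ∈ Finset.univ, (0:ℝ) ≤
          ‖B (b j) - Submodule.orthogonalProjection Lhat (B (b j))‖ ^ 2 :=
        fun j _ => sq_nonneg _
      have := (Finset.sum_eq_zero_iff_of_nonneg hnn).mp hzero i (Finset.mem_univ i)
      have hdiff : B (b i) - (Submodule.orthogonalProjection Lhat (B (b i)) : W) = 0 := by
        have := pow_eq_zero_iff (n := 2) (by norm_num) |>.mp this
        exact norm_eq_zero.mp this
      have : ((Submodule.orthogonalProjection Lhat (B (b i))) : W) = B (b i) :=
        (sub_eq_zero.mp hdiff).symm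
      exact (Submodule.starProjection_eq_self_iff (K := Lhat)).mp this
    intro h
    have htop : (⊤ : Submodule ℝ H) ≤ Lhat.comap B := by
      rw [← b.toBasis.span_eq]
      apply Submodule.span_le.mpr
      rintro _ ⟨i, rfl⟩
      simpa using hbase i
    exact htop Submodule.mem_top
  -- Lhatᗮ ≤ ker A
  have hLhatK : Lhatᗮ ≤ LinearMap.ker A := by
    intro ξ hξ
    rw [LinearMap.mem_ker]
    have h0 : ⟪A ξ, A ξ⟫_ℝ = 0 := by
      rw [← LinearMap.adjoint_inner_right]
      exact (Submodule.mem_orthogonal' _ _).mp hξ _ (hBLhat (A ξ))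
    exact inner_self_eq_zero.mp h0
  have hLK : Lᗮ ≤ LinearMap.ker A := fun ξ hξ => LinearMap.mem_ker.mpr (hA0 ξ hξ)
  -- the orthogonal complement of the kernel
  set F : Submodule ℝ W := (LinearMap.ker A)ᗮ with hF
  have hFL : F ≤ L := by
    have := Submodule.orthogonal_le hLK
    rwa [Submodule.orthogonal_orthogonal] at this
  have hmapF : ∀ x : L, (x : W) ∈ F → ((τ x : Lhat) : W) ∈ F := by
    intro x hx
    rw [hF, Submodule.mem_orthogonal]
    intro k hk
    set k1 := Submodule.orthogonalProjection Lhat k with hk1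
    have hk1K : (k1 : W) ∈ LinearMap.ker A := by
      have hd : k - (k1 : W) ∈ LinearMap.ker A :=
        hLhatK (Submodule.sub_starProjection_mem_orthogonal k)
      have : (k1 : W) = k - (k - (k1 : W)) := by abel
      rw [this]
      exact Submodule.sub_mem _ hk hd
    set y : L := τ.symm k1 with hy
    have hyK : (y : W) ∈ LinearMap.ker A := by
      have h1 : A ((τ y : Lhat) : W) = T (A (y : W)) := hT y
      have h2 : (τ y : Lhat) = k1 := by rw [hy, τ.apply_symm_apply]
      rw [h2] at h1
      have h3 : A ((k1 : W)) = 0 := LinearMap.mem_ker.mp hk1K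
      rw [h3] at h1
      have h4 : T (A (y : W)) = T 0 := by rw [← h1, T.map_zero]
      exact LinearMap.mem_ker.mpr (T.injective h4)
    have e2 : ⟪k - (k1 : W), ((τ x : Lhat) : W)⟫_ℝ = 0 :=
      (Submodule.mem_orthogonal' _ _).mp
        (Submodule.sub_starProjection_mem_orthogonal k) _ (τ x).2
    have e1 : ⟪(k1 : W), ((τ x : Lhat) : W)⟫_ℝ = 0 := by
      have h5 : (τ y : Lhat) = k1 := by rw [hy, τ.apply_symm_apply]
      have h6 : ⟪τ y, τ x⟫_ℝ = ⟪y, x⟫_ℝ := τ.inner_map_map y x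
      have h7 : ⟪(y : W), (x : W)⟫_ℝ = 0 :=
        (Submodule.mem_orthogonal _ _).mp hx _ hyK
      calc ⟪(k1 : W), ((τ x : Lhat) : W)⟫_ℝ
          = ⟪k1, τ x⟫_ℝ := rfl
        _ = ⟪τ y, τ x⟫_ℝ := by rw [h5]
        _ = ⟪y, x⟫_ℝ := h6
        _ = ⟪(y : W), (x : W)⟫_ℝ := rfl
        _ = 0 := h7
    calc ⟪k, ((τ x : Lhat) : W)⟫_ℝ
        = ⟪(k1 : W) + (k - (k1 : W)), ((τ x : Lhat) : W)⟫_ℝ := by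
          congr 1; abel
      _ = ⟪(k1 : W), ((τ x : Lhat) : W)⟫_ℝ
          + ⟪k - (k1 : W), ((τ x : Lhat) : W)⟫_ℝ := inner_add_left _ _ _
      _ = 0 := by rw [e1, e2]; ring
  -- package as submodule equality via dimension
  set j : L →ₗ[ℝ] W := Lhat.subtype.comp (τ.toLinearEquiv : L →ₗ[ℝ] Lhat) with hj
  have hjinj : Function.Injective j :=
    Lhat.injective_subtype.comp τ.toLinearEquiv.injective
  set M : Submodule ℝ W := Submodule.map j (Submodule.comap L.subtype F) with hM
  have hMF : M ≤ F := by
    rintro _ ⟨x, hx, rfl⟩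
    exact hmapF x hx
  have hrank : finrank ℝ M = finrank ℝ F := by
    have e1 : finrank ℝ M = finrank ℝ (Submodule.comap L.subtype F) :=
      (LinearEquiv.finrank_eq
        (Submodule.equivMapOfInjective j hjinj (Submodule.comap L.subtype F))).symm
    have e2 : finrank ℝ (Submodule.comap L.subtype F) = finrank ℝ F :=
      LinearEquiv.finrank_eq (Submodule.comapSubtypeEquivOfLe hFL)
    rw [e1, e2]
  have hMFeq : M = F := Submodule.eq_of_le_of_finrank_le hMF (le_of_eq hrank.symm)
  have hFtau : TauInvariant τ F := by
    refine ⟨hFL, ?_⟩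
    have hset : {x : L | (x : W) ∈ F} = ((Submodule.comap L.subtype F : Submodule ℝ L) : Set L) := rfl
    have himg : (fun x : L => ((τ x : Lhat) : W)) = ⇑j := rfl
    rw [hset, himg, ← Submodule.map_coe, ← hM, hMFeq]
  intro ξ hξ
  have h1 : Eᗮ ≤ Fᗮ := Submodule.orthogonal_le (hEmax F hFtau)
  have h2 : Fᗮ = LinearMap.ker A := Submodule.orthogonal_orthogonal _
  exact LinearMap.mem_ker.mp (h2 ▸ h1 hξ)
end
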